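/- arXiv:2008.06766 — 2 statements merged into one kernel-verified Lean document; each statement's English description precedes it below -/
import Mathlib

section
/- Fix δ > 0 and ε > 0 and a probability law λ₀ on ℝ with finite mean. Suppose λ is a probability law on ℝ that can be written as λ(·) = ∫ K(z,·) λ₁(dz), where K is a probability kernel with K(z, [z−δ, z+δ]ᶜ) = 0 for all z, and where the total variation distance between λ₀ and λ₁ is less than 8ε³. Then there exists a coupling ν of λ and λ₀ (a probability measure on ℝ² with first marginal λ and second marginal λ₀) such that ν({(x,y) : |x−y| > δ}) < 8ε³. -/
/-!
Split `λ₁` and `λ₀` by a Hahn set into their common part `λ₁ ∧ λ₀` plus excesses of equal mass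
`c ≤ ‖λ₀ − λ₁‖_TV`. Putting the common part on the diagonal and coupling the excesses
independently gives a coupling `π` of `λ₁` and `λ₀` with `π {z ≠ w} ≤ c`. Now replace the first
coordinate `z` of `(z, w) ∼ π` by a sample of `K(z, ·)`: the first marginal becomes `λ`, and on the
diagonal the first coordinate moves by at most `δ`, so the new coupling charges `{|x − y| > δ}`
with mass at most `c < 8ε³`.
-/

open MeasureTheory ProbabilityTheory Filter
open scoped ENNReal NNReal

noncomputable section

namespace Paper

/-- Total variation distance between two (finite) measures on `ℝ`,
`sup_A |μ(A) − ν(A)|` over measurable sets `A`. -/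
def tvDist (μ ν : Measure ℝ) : ℝ :=
  ⨆ s : {s : Set ℝ // MeasurableSet s}, |(μ s.1).toReal - (ν s.1).toReal|

open Set

section Coupling

variable {α β : Type*} [MeasurableSpace α] [MeasurableSpace β]

lemma inv_measure_univ_smul_smul (ρ : Measure α) [IsFiniteMeasure ρ] :
    (ρ univ)⁻¹ • ρ univ • ρ = ρ := by
  ext t ht
  simp only [Measure.smul_apply, smul_eq_mul]
  exact ENNReal.inv_mul_cancel_left' (measure_mono_null (subset_univ t))
    (absurd · (measure_ne_top ρ univ))

lemma exists_coupling_of_measure_univ_eq (ρ : Measure α) (σ : Measure β)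
    [IsFiniteMeasure ρ] [IsFiniteMeasure σ] (h : ρ univ = σ univ) :
    ∃ ξ : Measure (α × β), ξ.map Prod.fst = ρ ∧ ξ.map Prod.snd = σ := by
  refine ⟨(ρ univ)⁻¹ • ρ.prod σ, ?_, ?_⟩
  · rw [Measure.map_smul, Measure.map_fst_prod, ← h, inv_measure_univ_smul_smul]
  · rw [Measure.map_smul, Measure.map_snd_prod, h, inv_measure_univ_smul_smul]

lemma exists_common_part (μ ν : Measure α) [IsFiniteMeasure μ] [IsFiniteMeasure ν] :
    ∃ s, MeasurableSet s ∧ ∃ m ρ σ : Measure α, μ = m + ρ ∧ ν = m + σ ∧ ρ univ = μ s - ν s := by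
  obtain ⟨s, hs, hνμ, hμν⟩ := hahn_decomposition μ ν
  -- the common part is `μ ⊓ ν = ν|s + μ|sᶜ`
  have hle_s : ν.restrict s ≤ μ.restrict s := Measure.le_iff.2 fun t ht => by
    simpa only [Measure.restrict_apply ht] using hνμ _ (ht.inter hs) inter_subset_right
  have hle_sc : μ.restrict sᶜ ≤ ν.restrict sᶜ := Measure.le_iff.2 fun t ht => by
    simpa only [Measure.restrict_apply ht] using hμν _ (ht.inter hs.compl) inter_subset_right
  refine ⟨s, hs, ν.restrict s + μ.restrict sᶜ, μ.restrict s - ν.restrict s,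
    ν.restrict sᶜ - μ.restrict sᶜ, ?_, ?_, ?_⟩
  · rw [add_right_comm, add_comm (ν.restrict s), Measure.sub_add_cancel_of_le hle_s,
      Measure.restrict_add_restrict_compl hs]
  · rw [add_assoc, add_comm (μ.restrict sᶜ), Measure.sub_add_cancel_of_le hle_sc,
      Measure.restrict_add_restrict_compl hs]
  · rw [Measure.sub_apply .univ hle_s, Measure.restrict_apply_univ, Measure.restrict_apply_univ]

theorem exists_coupling_measure_ne_le_iSup_sub [MeasurableEq α] (μ ν : Measure α)
    [IsFiniteMeasure μ] [IsFiniteMeasure ν] (h : μ univ = ν univ) :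
    ∃ π : Measure (α × α), π.map Prod.fst = μ ∧ π.map Prod.snd = ν ∧
      π {p | p.1 ≠ p.2} ≤ ⨆ (s : Set α) (_ : MeasurableSet s), μ s - ν s := by
  obtain ⟨s, hs, m, ρ, σ, rfl, rfl, hρ⟩ := exists_common_part μ ν
  have : IsFiniteMeasure m := isFiniteMeasure_of_le (m + ρ) (Measure.le_add_right le_rfl)
  have : IsFiniteMeasure ρ := isFiniteMeasure_of_le (m + ρ) (Measure.le_add_left le_rfl)
  have : IsFiniteMeasure σ := isFiniteMeasure_of_le (m + σ) (Measure.le_add_left le_rfl)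
  have hρσ : ρ univ = σ univ := by
    simpa only [Measure.add_apply, ENNReal.add_right_inj (measure_ne_top m univ)] using h
  obtain ⟨ξ, hξ₁, hξ₂⟩ := exists_coupling_of_measure_univ_eq ρ σ hρσ
  have hdiag : Measurable fun x : α => (x, x) := measurable_id.prodMk measurable_id
  refine ⟨m.map (fun x => (x, x)) + ξ, ?_, ?_, ?_⟩
  · rw [Measure.map_add _ _ measurable_fst, Measure.map_map measurable_fst hdiag, hξ₁]
    exact congrArg (· + ρ) Measure.map_id
  · rw [Measure.map_add _ _ measurable_snd, Measure.map_map measurable_snd hdiag, hξ₂]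
    exact congrArg (· + σ) Measure.map_id
  · have hoff : MeasurableSet {p : α × α | p.1 ≠ p.2} := measurableSet_diagonal.compl
    calc (m.map (fun x => (x, x)) + ξ) {p | p.1 ≠ p.2}
        = ξ {p | p.1 ≠ p.2} := by
          rw [Measure.add_apply, Measure.map_apply hdiag hoff]
          simp
      _ ≤ ξ univ := measure_mono (subset_univ _)
      _ = ρ univ := by rw [← hξ₁, Measure.map_apply measurable_fst .univ, preimage_univ]
      _ ≤ ⨆ (s : Set α) (_ : MeasurableSet s), (m + ρ) s - (m + σ) s :=
          hρ ▸ le_iSup₂_of_le s hs le_rfl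

end Coupling

lemma tvDist_comm (μ ν : Measure ℝ) : tvDist μ ν = tvDist ν μ := by
  simp only [tvDist, abs_sub_comm]

lemma measure_sub_le_ofReal_tvDist (μ ν : Measure ℝ) [IsFiniteMeasure μ] [IsFiniteMeasure ν]
    {s : Set ℝ} (hs : MeasurableSet s) : μ s - ν s ≤ ENNReal.ofReal (tvDist μ ν) := by
  have hbdd : BddAbove (range fun t : {t : Set ℝ // MeasurableSet t} =>
      |(μ t.1).toReal - (ν t.1).toReal|) := by
    refine ⟨(μ univ).toReal + (ν univ).toReal, ?_⟩
    rintro _ ⟨t, rfl⟩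
    refine (abs_sub _ _).trans (add_le_add ?_ ?_) <;>
      rw [abs_of_nonneg ENNReal.toReal_nonneg] <;>
      exact ENNReal.toReal_mono (measure_ne_top _ _) (measure_mono (subset_univ _))
  calc μ s - ν s = ENNReal.ofReal ((μ s).toReal - (ν s).toReal) := by
        rw [ENNReal.ofReal_sub _ ENNReal.toReal_nonneg, ENNReal.ofReal_toReal (measure_ne_top _ _),
          ENNReal.ofReal_toReal (measure_ne_top _ _)]
    _ ≤ ENNReal.ofReal |(μ s).toReal - (ν s).toReal| := ENNReal.ofReal_le_ofReal (le_abs_self _)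
    _ ≤ ENNReal.ofReal (tvDist μ ν) := ENNReal.ofReal_le_ofReal (le_ciSup hbdd ⟨s, hs⟩)

lemma lintegral_le_measure_support {X : Type*} [MeasurableSpace X] {μ : Measure X}
    {f : X → ℝ≥0∞} (hf : ∀ x, f x ≤ 1) : ∫⁻ x, f x ∂μ ≤ μ (Function.support f) :=
  calc ∫⁻ x, f x ∂μ = ∫⁻ x in Function.support f, f x ∂μ :=
        (setLIntegral_eq_of_support_subset subset_rfl).symm
    _ ≤ ∫⁻ _ in Function.support f, 1 ∂μ := lintegral_mono hf
    _ = μ (Function.support f) := by rw [lintegral_one, Measure.restrict_apply_univ]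

section Transport

variable {α β γ : Type*} [MeasurableSpace α] [MeasurableSpace β] [MeasurableSpace γ]

def transportFst (K : Kernel α γ) (π : Measure (α × β)) : Measure (γ × β) :=
  (K.comap Prod.fst measurable_fst ×ₖ Kernel.deterministic Prod.snd measurable_snd) ∘ₘ π

lemma map_fst_transportFst (K : Kernel α γ) [IsSFiniteKernel K] (π : Measure (α × β)) :
    (transportFst K π).map Prod.fst = K ∘ₘ π.map Prod.fst := by
  rw [transportFst, Measure.map_comp _ _ measurable_fst, ← Kernel.fst_eq, Kernel.fst_prod,
    ← Kernel.comp_deterministic_eq_comap, ← Measure.comp_assoc, Measure.deterministic_comp_eq_map]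

lemma map_snd_transportFst (K : Kernel α γ) [IsMarkovKernel K] (π : Measure (α × β)) :
    (transportFst K π).map Prod.snd = π.map Prod.snd := by
  rw [transportFst, Measure.map_comp _ _ measurable_snd, ← Kernel.snd_eq, Kernel.snd_prod,
    Measure.deterministic_comp_eq_map]

lemma transportFst_apply_le (K : Kernel α γ) [IsMarkovKernel K] (π : Measure (α × β))
    {B : Set (γ × β)} (hB : MeasurableSet B) :
    transportFst K π B ≤ π (Function.support fun p => K p.1 ((·, p.2) ⁻¹' B)) := by
  rw [transportFst, Measure.bind_apply hB (Kernel.aemeasurable _)]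
  refine (le_of_eq (lintegral_congr fun p => ?_)).trans
    (lintegral_le_measure_support fun p => prob_le_one)
  rw [Kernel.prod_apply, Kernel.comap_apply, Kernel.deterministic_apply, Measure.prod_dirac,
    Measure.map_apply measurable_prodMk_right hB]

end Transport

theorem statement9_general (δ ε : ℝ) (hε : 0 < ε)
    (lam lam0 lam1 : Measure ℝ)
    [IsProbabilityMeasure lam0] [IsProbabilityMeasure lam1]
    (K : Kernel ℝ ℝ) [IsMarkovKernel K]
    (hK : ∀ z : ℝ, K z (Set.Icc (z - δ) (z + δ))ᶜ = 0)
    (hlam : lam = lam1.bind fun z => K z)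
    (htv : tvDist lam0 lam1 < 8 * ε ^ 3) :
    ∃ ν : Measure (ℝ × ℝ), IsProbabilityMeasure ν ∧
      ν.map Prod.fst = lam ∧ ν.map Prod.snd = lam0 ∧
      ν {p : ℝ × ℝ | δ < |p.1 - p.2|} < ENNReal.ofReal (8 * ε ^ 3) := by
  obtain ⟨π, hπ₁, hπ₀, hπ_off⟩ := exists_coupling_measure_ne_le_iSup_sub lam1 lam0 (by simp)
  have hν₀ : (transportFst K π).map Prod.snd = lam0 := by rw [map_snd_transportFst, hπ₀]
  have hB : MeasurableSet {p : ℝ × ℝ | δ < |p.1 - p.2|} :=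
    measurableSet_lt measurable_const (by fun_prop)
  have hK_far (z : ℝ) : K z {x | δ < |x - z|} = 0 := by
    refine measure_mono_null (fun x (hx : δ < |x - z|) => ?_) (hK z)
    intro hmem
    exact hx.not_ge (abs_sub_le_iff.2 ⟨by linarith [hmem.2], by linarith [hmem.1]⟩)
  have hsupp : (Function.support fun p : ℝ × ℝ => K p.1 ((·, p.2) ⁻¹' {q | δ < |q.1 - q.2|}))
      ⊆ {p | p.1 ≠ p.2} := by
    rintro ⟨z, w⟩ hzw (rfl : z = w)
    exact hzw (hK_far z)
  have htv' :
      (⨆ (s : Set ℝ) (_ : MeasurableSet s), lam1 s - lam0 s) < ENNReal.ofReal (8 * ε ^ 3) :=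
    calc (⨆ (s : Set ℝ) (_ : MeasurableSet s), lam1 s - lam0 s)
          ≤ ENNReal.ofReal (tvDist lam1 lam0) :=
          iSup₂_le fun s hs => measure_sub_le_ofReal_tvDist lam1 lam0 hs
      _ < _ := (ENNReal.ofReal_lt_ofReal_iff (by positivity)).2 (tvDist_comm lam1 lam0 ▸ htv)
  refine ⟨transportFst K π, ⟨?_⟩, by rw [map_fst_transportFst, hπ₁, hlam], hν₀, ?_⟩
  · rw [← measure_univ (μ := lam0), ← hν₀, Measure.map_apply measurable_snd .univ, preimage_univ]
  · calc _ ≤ π {p | p.1 ≠ p.2} := (transportFst_apply_le K π hB).trans (measure_mono hsupp)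
      _ ≤ _ := hπ_off
      _ < _ := htv'

/-- If `λ = ∫ K(z,·) λ₁(dz)` with `K(z, [z−δ, z+δ]ᶜ) = 0` for all `z` and
`‖λ₀ − λ₁‖_TV < 8ε³`, then there is a coupling `ν` of `λ` and `λ₀` with
`ν({|x − y| > δ}) < 8ε³`. -/
theorem statement9 (δ ε : ℝ) (hδ : 0 < δ) (hε : 0 < ε)
    (lam lam0 lam1 : Measure ℝ)
    [IsProbabilityMeasure lam] [IsProbabilityMeasure lam0] [IsProbabilityMeasure lam1]
    (hmean : Integrable (fun x : ℝ => x) lam0)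
    (K : Kernel ℝ ℝ) [IsMarkovKernel K]
    (hK : ∀ z : ℝ, K z (Set.Icc (z - δ) (z + δ))ᶜ = 0)
    (hlam : lam = lam1.bind fun z => K z)
    (htv : tvDist lam0 lam1 < 8 * ε ^ 3) :
    ∃ ν : Measure (ℝ × ℝ), IsProbabilityMeasure ν ∧
      ν.map Prod.fst = lam ∧ ν.map Prod.snd = lam0 ∧
      ν {p : ℝ × ℝ | δ < |p.1 - p.2|} < ENNReal.ofReal (8 * ε ^ 3) :=
  statement9_general δ ε hε lam lam0 lam1 K hK hlam htv

end Paper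
end
end

section
/- Let {Z_k}_{k≥0} be a Markov chain on the nonnegative reals such that for some constants α, β, γ > 0 (uniform in k and the starting point): |E[Z_k | Z_{k−1}] − Z_{k−1}| ≤ γ and E[Z_k² | Z_{k−1}] ≤ Z_{k−1}² + αZ_{k−1} + β. Then for all T, ε > 0 there exists L > 0 such that for all m ∈ ℕ, P(max_{k ≤ Tm} Z_k ≤ Lm | Z₀ = m) > 1 − ε. -/
open MeasureTheory ProbabilityTheory Filter
open scoped ENNReal NNReal

/-! By the lower drift bound, `Z k + k γ` is a submartingale, and by the upper drift bound its
mean at a time `n ≤ T m` is at most `m + 2 T m γ`. Doob's maximal inequality then bounds the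
probability that some `Z k` with `k ≤ T m` exceeds `L m` by `(1 + 2 T γ) / L`. -/

section Drift

variable {Ω : Type*} {m0 : MeasurableSpace Ω} {μ : Measure Ω}
  {ℱ : Filtration ℕ m0} {Z : ℕ → Ω → ℝ} {γ : ℝ}

theorem submartingale_add_mul_of_sub_le_condExp [IsFiniteMeasure μ]
    (hadp : StronglyAdapted ℱ Z) (hint : ∀ k, Integrable (Z k) μ)
    (hdrift : ∀ k, ∀ᵐ ω ∂μ, Z k ω - γ ≤ μ[Z (k + 1) | ℱ k] ω) :
    Submartingale (fun k ω => Z k ω + k * γ) ℱ μ := by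
  refine submartingale_nat (fun k => (hadp k).add stronglyMeasurable_const)
    (fun k => (hint k).add (integrable_const _)) fun k => ?_
  have hshift : μ[fun ω => Z (k + 1) ω + (k + 1 : ℕ) * γ | ℱ k]
      =ᵐ[μ] fun ω => μ[Z (k + 1) | ℱ k] ω + (k + 1 : ℕ) * γ := by
    filter_upwards [condExp_add (hint (k + 1)) (integrable_const ((k + 1 : ℕ) * γ)) (ℱ k)]
      with ω hω
    rw [Pi.add_apply, condExp_const (ℱ.le k)] at hω
    exact hω
  filter_upwards [hshift, hdrift k] with ω hω hZ
  rw [hω]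
  push_cast
  linarith

theorem integral_le_add_mul_of_condExp_le [IsProbabilityMeasure μ]
    (hint : ∀ k, Integrable (Z k) μ)
    (hdrift : ∀ k, ∀ᵐ ω ∂μ, μ[Z (k + 1) | ℱ k] ω ≤ Z k ω + γ) (k : ℕ) :
    ∫ ω, Z k ω ∂μ ≤ ∫ ω, Z 0 ω ∂μ + k * γ := by
  induction k with
  | zero => simp
  | succ k ih =>
    calc ∫ ω, Z (k + 1) ω ∂μ = ∫ ω, μ[Z (k + 1) | ℱ k] ω ∂μ := (integral_condExp (ℱ.le k)).symm
      _ ≤ ∫ ω, Z k ω + γ ∂μ :=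
        integral_mono_ae integrable_condExp ((hint k).add (integrable_const γ)) (hdrift k)
      _ = ∫ ω, Z k ω ∂μ + γ := by simp [integral_add (hint k) (integrable_const γ)]
      _ ≤ ∫ ω, Z 0 ω ∂μ + (k + 1 : ℕ) * γ := by push_cast; linarith

end Drift

theorem MeasureTheory.Submartingale.measure_exists_ge_le {Ω : Type*} {m0 : MeasurableSpace Ω}
    {μ : Measure Ω} [IsFiniteMeasure μ] {ℱ : Filtration ℕ m0} {f : ℕ → Ω → ℝ}
    (hf : Submartingale f ℱ μ) {n : ℕ} (hn : 0 ≤ᵐ[μ] f n) {r : ℝ} (hr : 0 < r) :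
    μ {ω | ∃ k ≤ n, r ≤ f k ω} ≤ ENNReal.ofReal ((∫ ω, f n ω ∂μ) / r) := by
  -- `maximal_ineq` needs a pointwise nonnegative submartingale, hence `f⁺`.
  set bad := {ω | ((r.toNNReal : ℝ≥0) : ℝ) ≤
    (Finset.range (n + 1)).sup' Finset.nonempty_range_add_one fun k => (f⁺) k ω}
  have hsub : {ω | ∃ k ≤ n, r ≤ f k ω} ⊆ bad := by
    rintro ω ⟨k, hkn, hk⟩
    rw [Set.mem_ofPred_eq, Real.coe_toNNReal _ hr.le]
    exact hk.trans <| le_sup_left.trans <|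
      Finset.le_sup' (fun k => (f⁺) k ω) (Finset.mem_range_succ_iff.2 hkn)
  have hpos : ∫ ω, (f⁺) n ω ∂μ = ∫ ω, f n ω ∂μ :=
    integral_congr_ae (hn.mono fun ω hω => sup_eq_left.2 hω)
  have hdoob : ENNReal.ofReal r * μ bad ≤ ENNReal.ofReal (∫ ω, f n ω ∂μ) :=
    (maximal_ineq hf.pos (fun k ω => le_sup_right) n).trans <| ENNReal.ofReal_le_ofReal <|
      hpos ▸ setIntegral_le_integral (hf.pos.integrable n)
        (Eventually.of_forall fun ω => le_sup_right)
  calc μ {ω | ∃ k ≤ n, r ≤ f k ω} ≤ μ bad := measure_mono hsub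
    _ ≤ ENNReal.ofReal (∫ ω, f n ω ∂μ) / ENNReal.ofReal r := by
      rw [ENNReal.le_div_iff_mul_le (.inl (by simpa using hr)) (.inl ENNReal.ofReal_ne_top),
        mul_comm]
      exact hdoob
    _ = ENNReal.ofReal ((∫ ω, f n ω ∂μ) / r) :=
      (ENNReal.ofReal_div_of_pos hr).symm

theorem ofReal_one_sub_lt_measure {Ω : Type*} {m0 : MeasurableSpace Ω} {μ : Measure Ω}
    [IsProbabilityMeasure μ] {s : Set Ω} {δ ε : ℝ} (hδ : 0 ≤ δ) (hδ1 : δ < 1) (hδε : δ < ε)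
    (hs : μ sᶜ ≤ ENNReal.ofReal δ) : ENNReal.ofReal (1 - ε) < μ s := by
  have hle : 1 - μ sᶜ ≤ μ s := by
    rw [tsub_le_iff_right, ← measure_univ (μ := μ), ← Set.union_compl_self s]
    exact measure_union_le s sᶜ
  calc ENNReal.ofReal (1 - ε) < ENNReal.ofReal (1 - δ) :=
        (ENNReal.ofReal_lt_ofReal_iff (by linarith)).2 (by linarith)
    _ = 1 - ENNReal.ofReal δ := by rw [ENNReal.ofReal_sub 1 hδ, ENNReal.ofReal_one]
    _ ≤ 1 - μ sᶜ := tsub_le_tsub_left hs 1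
    _ ≤ μ s := hle

namespace Paper

theorem statement11_general (α β γ : ℝ) (hγ : 0 < γ)
    (T ε : ℝ) (hT : 0 < T) (hε : 0 < ε) :
    ∃ L : ℝ, 0 < L ∧
      ∀ (m : ℕ) (Ω : Type) [MeasureSpace Ω] [IsProbabilityMeasure (volume : Measure Ω)],
      ∀ (F : ℕ → MeasurableSpace Ω) (Z : ℕ → Ω → ℝ),
        Monotone F → (∀ k, F k ≤ (inferInstance : MeasurableSpace Ω)) →
        (∀ k, @Measurable Ω ℝ (F k) _ (Z k)) →
        (∀ k, MemLp (Z k) 2 (volume : Measure Ω)) →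
        (∀ᵐ ω ∂(volume : Measure Ω), ∀ k, 0 ≤ Z k ω) →
        (∀ k, ∀ᵐ ω ∂(volume : Measure Ω),
          |((volume : Measure Ω)[Z (k + 1) | F k]) ω - Z k ω| ≤ γ) →
        (∀ k, ∀ᵐ ω ∂(volume : Measure Ω),
          ((volume : Measure Ω)[(fun ω' => (Z (k + 1) ω') ^ 2) | F k]) ω
            ≤ (Z k ω) ^ 2 + α * Z k ω + β) →
        (∀ᵐ ω ∂(volume : Measure Ω), Z 0 ω = m) →
        ENNReal.ofReal (1 - ε)
          < volume {ω | ∀ k : ℕ, (k : ℝ) ≤ T * m → Z k ω ≤ L * m} := by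
  obtain ⟨δ, hδ, hδ1, hδε⟩ : ∃ δ : ℝ, 0 < δ ∧ δ < 1 ∧ δ < ε :=
    ⟨min ε 1 / 2, by positivity, by linarith [min_le_right ε 1], by linarith [min_le_left ε 1]⟩
  set c := 1 + 2 * T * γ
  refine ⟨c / δ, by positivity, fun m Ω _ _ F Z hmono hle hZmeas hZL2 hZnonneg hdrift _ hZ0 =>
    ofReal_one_sub_lt_measure hδ.le hδ1 hδε ?_⟩
  rcases Nat.eq_zero_or_pos m with rfl | hm
  · have hS : ∀ᵐ ω, ∀ k : ℕ, (k : ℝ) ≤ T * (0 : ℕ) → Z k ω ≤ c / δ * (0 : ℕ) :=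
      hZ0.mono fun ω hZ k hk => by
        obtain rfl : k = 0 := by simpa using hk
        simp [hZ]
    exact (ae_iff.1 hS).trans_le bot_le
  let ℱ : Filtration ℕ _ := ⟨F, hmono, hle⟩
  have hint k : Integrable (Z k) := (hZL2 k).integrable one_le_two
  have hsub := submartingale_add_mul_of_sub_le_condExp (ℱ := ℱ) (γ := γ)
    (fun k => (hZmeas k).stronglyMeasurable) hint
    fun k => (hdrift k).mono fun ω h => by linarith [(abs_le.1 h).1]
  set n := ⌊T * m⌋₊
  have hn : (n : ℝ) ≤ T * m := Nat.floor_le (by positivity)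
  have hmean : ∫ ω, Z n ω + n * γ ≤ c * m := by
    have := integral_le_add_mul_of_condExp_le (ℱ := ℱ) (γ := γ) hint
      (fun k => (hdrift k).mono fun ω h => by linarith [(abs_le.1 h).2]) n
    rw [integral_congr_ae hZ0, integral_const] at this
    rw [integral_add (hint n) (integrable_const _), integral_const]
    simp only [probReal_univ, smul_eq_mul, one_mul] at this ⊢
    nlinarith
  calc volume {ω | ∀ k : ℕ, (k : ℝ) ≤ T * m → Z k ω ≤ c / δ * m}ᶜ
      ≤ volume {ω | ∃ k ≤ n, c / δ * m ≤ Z k ω + k * γ} := by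
        refine measure_mono fun ω hω => ?_
        simp only [Set.mem_compl_iff, Set.mem_ofPred_eq, not_forall, not_le] at hω
        obtain ⟨k, hk, hZk⟩ := hω
        exact ⟨k, Nat.le_floor hk, by nlinarith [k.cast_nonneg (α := ℝ)]⟩
    _ ≤ ENNReal.ofReal ((∫ ω, Z n ω + n * γ) / (c / δ * m)) :=
        hsub.measure_exists_ge_le (hZnonneg.mono fun ω h => by positivity [h n]) (by positivity)
    _ ≤ ENNReal.ofReal δ := by
        gcongr
        rw [div_le_iff₀ (by positivity)]
        field_simp
        linarith

/-- For a nonnegative Markov chain with one-step drift bounded by `γ` and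
second moment growth `E[Z_k²|Z_{k−1}] ≤ Z_{k−1}² + αZ_{k−1} + β`, for all `T, ε > 0`
there is `L > 0` such that for all `m`, `P(max_{k≤Tm} Z_k ≤ Lm | Z₀ = m) > 1 − ε`. -/
theorem statement11 (α β γ : ℝ) (hα : 0 < α) (hβ : 0 < β) (hγ : 0 < γ)
    (T ε : ℝ) (hT : 0 < T) (hε : 0 < ε) :
    ∃ L : ℝ, 0 < L ∧
      ∀ (m : ℕ) (Ω : Type) [MeasureSpace Ω] [IsProbabilityMeasure (volume : Measure Ω)],
      ∀ (F : ℕ → MeasurableSpace Ω) (Z : ℕ → Ω → ℝ),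
        Monotone F → (∀ k, F k ≤ (inferInstance : MeasurableSpace Ω)) →
        (∀ k, @Measurable Ω ℝ (F k) _ (Z k)) →
        (∀ k, MemLp (Z k) 2 (volume : Measure Ω)) →
        (∀ᵐ ω ∂(volume : Measure Ω), ∀ k, 0 ≤ Z k ω) →
        (∀ k, ∀ᵐ ω ∂(volume : Measure Ω),
          |((volume : Measure Ω)[Z (k + 1) | F k]) ω - Z k ω| ≤ γ) →
        (∀ k, ∀ᵐ ω ∂(volume : Measure Ω),
          ((volume : Measure Ω)[(fun ω' => (Z (k + 1) ω') ^ 2) | F k]) ω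
            ≤ (Z k ω) ^ 2 + α * Z k ω + β) →
        (∀ᵐ ω ∂(volume : Measure Ω), Z 0 ω = m) →
        ENNReal.ofReal (1 - ε)
          < volume {ω | ∀ k : ℕ, (k : ℝ) ≤ T * m → Z k ω ≤ L * m} :=
  statement11_general α β γ hγ T ε hT hε

end Paper
end
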